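/- EL ontologies do not admit finite CQ-frontiers within ELIQ: the ELIQ q = A ∧ B has no finite CQ-frontier wrt the EL ontology O = {A ⊑ ∃R.A, ∃R.A ⊑ A} within ELIQs. In particular, EL does not admit finite frontiers within ELIQ. -/
import Mathlib


namespace OMQLean

/-! ## Basic objects: constants, variables, atoms, data instances -/

abbrev Const := ℕ
abbrev Var := ℕ

/-- Atoms of data instances: `⊤(a)`, `A(a)`, `P(a,b)` (predicates named by naturals). -/
inductive Atom where
  | top : Const → Atom
  | un : ℕ → Const → Atom
  | bin : ℕ → Const → Const → Atom
deriving DecidableEq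

def Atom.consts : Atom → Finset Const
  | .top a => {a}
  | .un _ a => {a}
  | .bin _ a b => {a, b}

/-- A data instance: a nonempty finite set of atoms. -/
structure DataInstance where
  atoms : Finset Atom
  nonemp : atoms.Nonempty

instance : DecidableEq DataInstance := fun A B =>
  decidable_of_iff (A.atoms = B.atoms) (by cases A; cases B; simp)

/-- The individuals (constants) occurring in a data instance. -/
def DataInstance.ind (A : DataInstance) : Finset Const := A.atoms.biUnion Atom.consts

/-! ## First-order logic over the signature -/

inductive Term where
  | var : Var → Term
  | cst : Const → Term
deriving DecidableEq

inductive Fml where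
  | top : Fml
  | bot : Fml
  | eq : Term → Term → Fml
  | un : ℕ → Term → Fml
  | bin : ℕ → Term → Term → Fml
  | and : Fml → Fml → Fml
  | or : Fml → Fml → Fml
  | imp : Fml → Fml → Fml
  | not : Fml → Fml
  | all : Var → Fml → Fml
  | ex : Var → Fml → Fml
deriving DecidableEq

/-- An ontology is a finite set of first-order sentences. -/
abbrev Ontology := Finset Fml

/-- An interpretation with domain `D`; constants are interpreted injectively
(standard name assumption: distinct constants denote distinct elements). -/
structure Interp (D : Type) where
  cst : Const → D
  cstInj : Function.Injective cst
  un : ℕ → D → Prop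
  bin : ℕ → D → D → Prop

def Term.eval {D : Type} (I : Interp D) (ν : Var → D) : Term → D
  | .var v => ν v
  | .cst c => I.cst c

def Fml.Holds {D : Type} (I : Interp D) : (Var → D) → Fml → Prop
  | _, .top => True
  | _, .bot => False
  | ν, .eq t s => t.eval I ν = s.eval I ν
  | ν, .un A t => I.un A (t.eval I ν)
  | ν, .bin P t s => I.bin P (t.eval I ν) (s.eval I ν)
  | ν, .and f g => f.Holds I ν ∧ g.Holds I ν
  | ν, .or f g => f.Holds I ν ∨ g.Holds I ν
  | ν, .imp f g => f.Holds I ν → g.Holds I ν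
  | ν, .not f => ¬ f.Holds I ν
  | ν, .all v f => ∀ d : D, f.Holds I (Function.update ν v d)
  | ν, .ex v f => ∃ d : D, f.Holds I (Function.update ν v d)

def Interp.satAtom {D : Type} (I : Interp D) : Atom → Prop
  | .top _ => True
  | .un A a => I.un A (I.cst a)
  | .bin P a b => I.bin P (I.cst a) (I.cst b)

def Interp.modelsO {D : Type} (I : Interp D) (O : Ontology) : Prop :=
  ∀ f ∈ O, ∀ ν : Var → D, Fml.Holds I ν f

def Interp.modelsD {D : Type} (I : Interp D) (A : DataInstance) : Prop :=
  ∀ α ∈ A.atoms, I.satAtom α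

/-- A formula contains no equality. -/
def Fml.noEq : Fml → Prop
  | .eq _ _ => False
  | .and f g => f.noEq ∧ g.noEq
  | .or f g => f.noEq ∧ g.noEq
  | .imp f g => f.noEq ∧ g.noEq
  | .not f => f.noEq
  | .all _ f => f.noEq
  | .ex _ f => f.noEq
  | _ => True

def Fml.size : Fml → ℕ
  | .top => 1
  | .bot => 1
  | .eq _ _ => 1
  | .un _ _ => 1
  | .bin _ _ _ => 1
  | .and f g => f.size + g.size + 1
  | .or f g => f.size + g.size + 1
  | .imp f g => f.size + g.size + 1
  | .not f => f.size + 1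
  | .all _ f => f.size + 1
  | .ex _ f => f.size + 1

def ontSize (O : Ontology) : ℕ := ∑ f ∈ O, f.size

/-! ## Conjunctive queries with one answer variable (the variable `0`) -/

inductive CQAtom where
  | top : Var → CQAtom
  | un : ℕ → Var → CQAtom
  | bin : ℕ → Var → Var → CQAtom
deriving DecidableEq

def CQAtom.vars : CQAtom → Finset Var
  | .top v => {v}
  | .un _ v => {v}
  | .bin _ v w => {v, w}

/-- A conjunctive query, identified with its finite set of atoms;
the answer variable is `0`. -/
structure CQ where
  atoms : Finset CQAtom
deriving DecidableEq

instance : Inhabited CQ := ⟨⟨∅⟩⟩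

/-- The query `⊤`. -/
def topCQ : CQ := ⟨∅⟩

def CQ.vars (q : CQ) : Finset Var := insert 0 (q.atoms.biUnion CQAtom.vars)

/-- Conjunction of two CQs (sharing the answer variable). -/
def CQ.and (q₁ q₂ : CQ) : CQ := ⟨q₁.atoms ∪ q₂.atoms⟩

def CQ.size (q : CQ) : ℕ := q.atoms.card + 1

def CQAtom.holds {D : Type} (I : Interp D) (h : Var → D) : CQAtom → Prop
  | .top _ => True
  | .un A v => I.un A (h v)
  | .bin P v w => I.bin P (h v) (h w)

def Interp.satCQ {D : Type} (I : Interp D) (q : CQ) (d : D) : Prop :=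
  ∃ h : Var → D, h 0 = d ∧ ∀ α ∈ q.atoms, CQAtom.holds I h α

/-- `cert O A q a`: `a` is a certain answer to `q` over `A` wrt `O`,
i.e. `O, A ⊨ q(a)`. -/
def cert (O : Ontology) (A : DataInstance) (q : CQ) (a : Const) : Prop :=
  ∀ (D : Type) (I : Interp D), I.modelsO O → I.modelsD A → I.satCQ q (I.cst a)

/-- `O` and `A` are (jointly) satisfiable. -/
def DataInstance.satWith (O : Ontology) (A : DataInstance) : Prop :=
  ∃ (D : Type) (I : Interp D), I.modelsO O ∧ I.modelsD A

/-- `q(x)` is satisfiable wrt `O`: `O ∪ {q(x)}` has a model. -/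
def CQ.satWrt (O : Ontology) (q : CQ) : Prop :=
  ∃ (D : Type) (I : Interp D) (d : D), I.modelsO O ∧ I.satCQ q d

/-- Containment `q₁ ⊨_O q₂`. -/
def containsO (O : Ontology) (q₁ q₂ : CQ) : Prop :=
  ∀ (A : DataInstance) (a : Const), a ∈ A.ind → cert O A q₁ a → cert O A q₂ a

/-- Equivalence `q₁ ≡_O q₂`. -/
def equivO (O : Ontology) (q₁ q₂ : CQ) : Prop :=
  containsO O q₁ q₂ ∧ containsO O q₂ q₁

def CQAtom.mapVar (g : Var → Var) : CQAtom → CQAtom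
  | .top v => .top (g v)
  | .un A v => .un A (g v)
  | .bin P v w => .bin P (g v) (g w)

def CQ.mapVars (g : Var → Var) (q : CQ) : CQ := ⟨q.atoms.image (CQAtom.mapVar g)⟩

def CQAtom.toAtom (g : Var → Const) : CQAtom → Atom
  | .top v => .top (g v)
  | .un A v => .un A (g v)
  | .bin P v w => .bin P (g v) (g w)

def CQAtom.presIn (A : DataInstance) (h : Var → Const) : CQAtom → Prop
  | .top _ => True
  | .un B v => Atom.un B (h v) ∈ A.atoms
  | .bin P v w => Atom.bin P (h v) (h w) ∈ A.atoms

/-- A homomorphism from the CQ `q` to the data instance `A`. -/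
def IsHom (q : CQ) (A : DataInstance) (h : Var → Const) : Prop :=
  (∀ v ∈ q.vars, h v ∈ A.ind) ∧ ∀ α ∈ q.atoms, CQAtom.presIn A h α

def HomSurj (q : CQ) (A : DataInstance) (h : Var → Const) : Prop :=
  ∀ c ∈ A.ind, ∃ v ∈ q.vars, h v = c

/-- The pointed data instance induced by a CQ: replace every variable `v` by the
constant `v` (distinct fresh constants); the answer variable `0` becomes the point `0`. -/
def inducedDI (q : CQ) : DataInstance :=
  ⟨insert (Atom.top 0) (q.atoms.image (CQAtom.toAtom id)), Finset.insert_nonempty _ _⟩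

/-- `hat` witnesses that `O` admits containment reduction: conditions (cr1)-(cr3). -/
structure CRWitness (O : Ontology) (hat : CQ → DataInstance × Const) : Prop where
  mem : ∀ q : CQ, (hat q).2 ∈ (hat q).1.ind
  cr1 : ∀ q : CQ, (CQ.satWrt O q ↔ DataInstance.satWith O (hat q).1)
  cr2 : ∀ q : CQ, ∃ h : Var → Const,
    IsHom q (hat q).1 h ∧ h 0 = (hat q).2 ∧ HomSurj q (hat q).1 h
  cr3 : ∀ q : CQ, CQ.satWrt O q →
    ∀ q' : CQ, (containsO O q q' ↔ cert O (hat q).1 q' (hat q).2)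

def AdmitsCR (O : Ontology) : Prop := ∃ hat, CRWitness O hat

/-! ## Example sets, unique characterisations, frontiers, meet-reducibility, split-partners -/

/-- An example set: finite sets of positive and negative pointed data instances. -/
structure ExampleSet where
  pos : Finset (DataInstance × Const)
  neg : Finset (DataInstance × Const)

def ExampleSet.wf (E : ExampleSet) : Prop :=
  (∀ p ∈ E.pos, p.2 ∈ p.1.ind) ∧ (∀ p ∈ E.neg, p.2 ∈ p.1.ind)

def fits (O : Ontology) (q : CQ) (E : ExampleSet) : Prop :=
  (∀ p ∈ E.pos, cert O p.1 q p.2) ∧ (∀ p ∈ E.neg, ¬ cert O p.1 q p.2)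

/-- `E` uniquely characterises `q` wrt `O` within the class `Q`. -/
def uniqChar (O : Ontology) (Q : Set CQ) (q : CQ) (E : ExampleSet) : Prop :=
  E.wf ∧ fits O q E ∧ ∀ q' ∈ Q, fits O q' E → equivO O q q'

def ExampleSet.size (E : ExampleSet) : ℕ :=
  (∑ p ∈ E.pos, (p.1.atoms.card + 1)) + (∑ p ∈ E.neg, (p.1.atoms.card + 1))

/-- A frontier of `q` wrt `O` within the class `Q`. -/
def IsFrontier (O : Ontology) (Q : Set CQ) (q : CQ) (F : Set CQ) : Prop :=
  F ⊆ Q ∧ (∀ q' ∈ F, containsO O q q' ∧ ¬ containsO O q' q) ∧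
  ∀ q'' ∈ Q, containsO O q q'' → (containsO O q'' q ∨ ∃ q' ∈ F, containsO O q' q'')

/-- `r` is meet-reducible wrt `O` within `Q`. -/
def MeetReducible (O : Ontology) (Q : Set CQ) (r : CQ) : Prop :=
  ∃ r₁ ∈ Q, ∃ r₂ ∈ Q, equivO O r (CQ.and r₁ r₂) ∧ ¬ equivO O r r₁ ∧ ¬ equivO O r r₂

/-- `O` admits singular⁺ characterisations within `Q` (via the containment-reduction map `hat`):
every satisfiable query in `Q` has a unique characterisation with positive part `{hat q}`. -/
def AdmitsSingPlus (O : Ontology) (hat : CQ → DataInstance × Const) (Q : Set CQ) : Prop :=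
  ∀ q ∈ Q, CQ.satWrt O q →
    ∃ N : Finset (DataInstance × Const), uniqChar O Q q ⟨{hat q}, N⟩

/-- `O` admits singular⁺ characterisations within `Q` of size bounded by the polynomial `p`. -/
def PolySingPlus (O : Ontology) (hat : CQ → DataInstance × Const) (Q : Set CQ)
    (p : Polynomial ℕ) : Prop :=
  ∀ q ∈ Q, CQ.satWrt O q →
    ∃ N : Finset (DataInstance × Const), uniqChar O Q q ⟨{hat q}, N⟩ ∧
      ExampleSet.size ⟨{hat q}, N⟩ ≤ p.eval q.size

/-! ## Signatures -/

/-- A finite relational signature: a finite set of unary and of binary predicate names. -/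
abbrev Sig := Finset ℕ × Finset ℕ

def Atom.inSig (σ : Sig) : Atom → Prop
  | .top _ => True
  | .un A _ => A ∈ σ.1
  | .bin P _ _ => P ∈ σ.2

def DataInstance.inSig (σ : Sig) (A : DataInstance) : Prop := ∀ α ∈ A.atoms, α.inSig σ

def CQAtom.inSig (σ : Sig) : CQAtom → Prop
  | .top _ => True
  | .un A _ => A ∈ σ.1
  | .bin P _ _ => P ∈ σ.2

def CQ.inSig (σ : Sig) (q : CQ) : Prop := ∀ α ∈ q.atoms, α.inSig σ

def Fml.inSig (σ : Sig) : Fml → Prop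
  | .top => True
  | .bot => True
  | .eq _ _ => True
  | .un A _ => A ∈ σ.1
  | .bin P _ _ => P ∈ σ.2
  | .and f g => f.inSig σ ∧ g.inSig σ
  | .or f g => f.inSig σ ∧ g.inSig σ
  | .imp f g => f.inSig σ ∧ g.inSig σ
  | .not f => f.inSig σ
  | .all _ f => f.inSig σ
  | .ex _ f => f.inSig σ

/-- The restriction `Q^σ` of a class of queries to the signature `σ`. -/
def Qsig (Q : Set CQ) (σ : Sig) : Set CQ := {s | s ∈ Q ∧ s.inSig σ}

/-- `S` is a split-partner for the finite set `Qf` of queries wrt `O` within the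
class `Qcls` of `σ`-queries. -/
def IsSplitPartner (O : Ontology) (σ : Sig) (Qcls : Set CQ) (Qf : Finset CQ)
    (S : Finset (DataInstance × Const)) : Prop :=
  (∀ p ∈ S, p.1.inSig σ ∧ p.2 ∈ p.1.ind) ∧
  ∀ q' ∈ Qcls, ((∃ p ∈ S, cert O p.1 q' p.2) ↔ ∀ q ∈ Qf, ¬ containsO O q' q)

def splitSize (S : Finset (DataInstance × Const)) : ℕ := ∑ p ∈ S, (p.1.atoms.card + 1)

def finsetCQSize (Qf : Finset CQ) : ℕ := ∑ s ∈ Qf, s.size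

/-- `q' ⊨_O ⊥`. -/
def containsBot (O : Ontology) (q' : CQ) : Prop :=
  ∀ (A : DataInstance) (a : Const), a ∈ A.ind → cert O A q' a → ¬ A.satWith O

/-- `S` is a split-partner for `{⊥(x)}` wrt `O` within `Qcls`. -/
def IsBotSplitPartner (O : Ontology) (σ : Sig) (Qcls : Set CQ)
    (S : Finset (DataInstance × Const)) : Prop :=
  (∀ p ∈ S, p.1.inSig σ ∧ p.2 ∈ p.1.ind) ∧
  ∀ q' ∈ Qcls, ((∃ p ∈ S, cert O p.1 q' p.2) ↔ ¬ containsBot O q')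

/-! ## Description logic: roles, DL-Lite_F, ALCHI, ELIQs -/

inductive DLRole where
  | nm : ℕ → DLRole
  | inv : ℕ → DLRole
deriving DecidableEq

def DLRole.fml (S : DLRole) (x y : Var) : Fml :=
  match S with
  | .nm P => .bin P (.var x) (.var y)
  | .inv P => .bin P (.var y) (.var x)

def DLRole.inSig (σ : Sig) : DLRole → Prop
  | .nm P => P ∈ σ.2
  | .inv P => P ∈ σ.2

/-- Basic concepts of DL-Lite: a concept name or `∃ S`. -/
inductive DLBasic where
  | cn : ℕ → DLBasic
  | ex : DLRole → DLBasic
deriving DecidableEq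

/-- The standard translation of a basic concept, with free variable `0`. -/
def DLBasic.fml : DLBasic → Fml
  | .cn A => .un A (.var 0)
  | .ex S => .ex 1 (S.fml 0 1)

/-- DL-Lite_F axioms: concept inclusions, concept disjointness, functionality. -/
inductive DLLiteFAx where
  | incl : DLBasic → DLBasic → DLLiteFAx
  | disj : DLBasic → DLBasic → DLLiteFAx
  | func : DLRole → DLLiteFAx
deriving DecidableEq

def DLLiteFAx.fml : DLLiteFAx → Fml
  | .incl B B' => .all 0 (.imp B.fml B'.fml)
  | .disj B B' => .all 0 (.imp (.and B.fml B'.fml) .bot)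
  | .func S => .all 0 (.all 1 (.all 2 (.imp (.and (S.fml 0 1) (S.fml 0 2))
      (.eq (.var 1) (.var 2)))))

/-- `O` is a DL-Lite_F ontology. -/
def IsDLLiteF (O : Ontology) : Prop := ∀ f ∈ O, ∃ ax : DLLiteFAx, f = ax.fml

/-- ALCHI concepts. -/
inductive AConcept where
  | top : AConcept
  | cn : ℕ → AConcept
  | and : AConcept → AConcept → AConcept
  | not : AConcept → AConcept
  | ex : DLRole → AConcept → AConcept
deriving DecidableEq

/-- Standard translation of an ALCHI concept with free variable `v`
(quantified variables increase). -/
def AConcept.fml : AConcept → Var → Fml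
  | .top, _ => .top
  | .cn A, v => .un A (.var v)
  | .and C D, v => .and (C.fml v) (D.fml v)
  | .not C, v => .not (C.fml v)
  | .ex S C, v => .ex (v+1) (.and (S.fml v (v+1)) (C.fml (v+1)))

def AConcept.inSig (σ : Sig) : AConcept → Prop
  | .top => True
  | .cn A => A ∈ σ.1
  | .and C D => C.inSig σ ∧ D.inSig σ
  | .not C => C.inSig σ
  | .ex S C => S.inSig σ ∧ C.inSig σ

/-- ALCHI axioms: concept inclusions and role inclusions. -/
inductive ALCHIAx where
  | ci : AConcept → AConcept → ALCHIAx
  | ri : DLRole → DLRole → ALCHIAx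
deriving DecidableEq

def ALCHIAx.fml : ALCHIAx → Fml
  | .ci C D => .all 0 (.imp (C.fml 0) (D.fml 0))
  | .ri S S' => .all 0 (.all 1 (.imp (S.fml 0 1) (S'.fml 0 1)))

def ALCHIAx.inSig (σ : Sig) : ALCHIAx → Prop
  | .ci C D => C.inSig σ ∧ D.inSig σ
  | .ri S S' => S.inSig σ ∧ S'.inSig σ

/-- `O` is an ALCHI ontology in the signature `σ`. -/
def IsALCHI (σ : Sig) (O : Ontology) : Prop :=
  ∀ f ∈ O, ∃ ax : ALCHIAx, f = ax.fml ∧ ax.inSig σ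

/-- ELIQs: `q ::= ⊤ | A | ∃P.q | ∃P⁻.q | q ∧ q'`. -/
inductive ELIQ where
  | top : ELIQ
  | un : ℕ → ELIQ
  | exN : ℕ → ELIQ → ELIQ
  | exI : ℕ → ELIQ → ELIQ
  | and : ELIQ → ELIQ → ELIQ
deriving DecidableEq

def ELIQ.size : ELIQ → ℕ
  | .top => 1
  | .un _ => 1
  | .exN _ e => e.size + 1
  | .exI _ e => e.size + 1
  | .and e₁ e₂ => e₁.size + e₂.size + 1

def ELIQ.inSig (σ : Sig) : ELIQ → Prop
  | .top => True
  | .un A => A ∈ σ.1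
  | .exN P e => P ∈ σ.2 ∧ e.inSig σ
  | .exI P e => P ∈ σ.2 ∧ e.inSig σ
  | .and e₁ e₂ => e₁.inSig σ ∧ e₂.inSig σ

/-- Atoms of the tree-shaped CQ of an ELIQ: root variable `v`, fresh variables from `n`.
Returns the atoms and the next fresh variable. -/
def ELIQ.atomsAux : ELIQ → Var → ℕ → Finset CQAtom × ℕ
  | .top, _, n => (∅, n)
  | .un A, v, n => ({CQAtom.un A v}, n)
  | .exN P e, v, n =>
      let r := e.atomsAux n (n+1)
      (insert (CQAtom.bin P v n) r.1, r.2)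
  | .exI P e, v, n =>
      let r := e.atomsAux n (n+1)
      (insert (CQAtom.bin P n v) r.1, r.2)
  | .and e₁ e₂, v, n =>
      let r₁ := e₁.atomsAux v n
      let r₂ := e₂.atomsAux v r₁.2
      (r₁.1 ∪ r₂.1, r₂.2)

/-- The tree-shaped CQ corresponding to an ELIQ (answer variable `0`). -/
def ELIQ.toCQ (e : ELIQ) : CQ := ⟨(e.atomsAux 0 1).1⟩

/-- The class of all `σ`-ELIQs, as a class of CQs. -/
def ELIQclass (σ : Sig) : Set CQ := {q | ∃ e : ELIQ, e.inSig σ ∧ q = e.toCQ}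

/-- The class of all ELIQs, as a class of CQs. -/
def ELIQall : Set CQ := {q | ∃ e : ELIQ, q = e.toCQ}

/-- A CQ-frontier for a query `q` wrt `O` (competitors range over ELIQs). -/
def IsCQFrontier (O : Ontology) (q : CQ) (F : Set CQ) : Prop :=
  (∀ q' ∈ F, ∀ e : ELIQ, containsO O q' e.toCQ →
    containsO O q e.toCQ ∧ ¬ containsO O e.toCQ q) ∧
  ∀ e : ELIQ, containsO O q e.toCQ → ¬ containsO O e.toCQ q →
    ∃ q' ∈ F, containsO O q' e.toCQ

/-! ## Temporal data instances and temporal path queries -/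

/-- The "empty" data instance `∅ = {⊤(a)}` (semantically inert padding). -/
def DataInstance.empty : DataInstance := ⟨{Atom.top 0}, by simp⟩

/-- A temporal data instance: a nonempty finite sequence of data instances,
all over the same set `inds` of individuals (implicitly padded with `⊤`-atoms). -/
structure TDI where
  seq : List DataInstance
  ne : seq ≠ []
  inds : Finset Const
  ok : ∀ A ∈ seq, A.ind ⊆ inds

/-- The data instance at timestamp `ℓ` (the empty instance beyond the end). -/
def TDI.nth (D : TDI) (ℓ : ℕ) : DataInstance := D.seq.getD ℓ DataInstance.empty

def TDI.satWith (O : Ontology) (D : TDI) : Prop := ∀ A ∈ D.seq, A.satWith O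

def TDI.size (D : TDI) : ℕ := (D.seq.map (fun A => A.atoms.card + 1)).sum

/-- Temporal operators: `○` (next), `◇` (sometime strictly later), `◇r` (now or later). -/
inductive TOp where
  | nxt : TOp
  | dia : TOp
  | diar : TOp
deriving DecidableEq

instance : Inhabited TOp := ⟨TOp.nxt⟩

/-- A temporal path query `r₀ ∧ o₁(r₁ ∧ o₂(r₂ ∧ ⋯ ∧ oₙ rₙ))` from the class
`LTL_p^{○◇◇r}(Q)`, given by the head `r₀` and the list `[(o₁,r₁),…,(oₙ,rₙ)]`. -/
structure TPQ where
  head : CQ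
  tail : List (TOp × CQ)

/-- Temporal depth. -/
def TPQ.tdp (q : TPQ) : ℕ := q.tail.length

/-- The domain query at position `j` (`0 ≤ j ≤ tdp`). -/
def TPQ.r (q : TPQ) (j : ℕ) : CQ := if j = 0 then q.head else (q.tail.getD (j-1) default).2

/-- The temporal operator between positions `j-1` and `j` (for `1 ≤ j ≤ tdp`). -/
def TPQ.op (q : TPQ) (j : ℕ) : TOp := (q.tail.getD (j-1) default).1

def TPQ.size (q : TPQ) : ℕ := q.head.size + (q.tail.map (fun p => p.2.size + 1)).sum

/-- The query is built from domain queries in `Q`. -/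
def TPQ.overQ (Q : Set CQ) (q : TPQ) : Prop := q.head ∈ Q ∧ ∀ p ∈ q.tail, p.2 ∈ Q

/-- The query uses only `○` and `◇` (no `◇r`). -/
def TPQ.noDiar (q : TPQ) : Prop := ∀ p ∈ q.tail, p.1 ≠ TOp.diar

def entailsAux (O : Ontology) (D : TDI) (a : Const) :
    List (TOp × CQ) → ℕ → CQ → Prop
  | [], ℓ, r => cert O (D.nth ℓ) r a
  | (op, r') :: rest, ℓ, r =>
      cert O (D.nth ℓ) r a ∧
      match op with
      | .nxt => entailsAux O D a rest (ℓ+1) r'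
      | .dia => ∃ m, ℓ < m ∧ entailsAux O D a rest m r'
      | .diar => ∃ m, ℓ ≤ m ∧ entailsAux O D a rest m r'

/-- `O, D, 0, a ⊨ q` (everything is entailed if `O` and `D` are unsatisfiable). -/
def entailsT (O : Ontology) (D : TDI) (a : Const) (q : TPQ) : Prop :=
  ¬ D.satWith O ∨ entailsAux O D a q.tail 0 q.head

/-- Equivalence of temporal path queries wrt `O`: same entailment at time `0` on all
pointed temporal data instances. -/
def equivT (O : Ontology) (q₁ q₂ : TPQ) : Prop :=
  ∀ (D : TDI) (a : Const), a ∈ D.inds → (entailsT O D a q₁ ↔ entailsT O D a q₂)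

/-- A temporal example set (finite sets of pointed temporal data instances, as lists). -/
structure TExampleSet where
  pos : List (TDI × Const)
  neg : List (TDI × Const)

def TExampleSet.wf (E : TExampleSet) : Prop :=
  (∀ p ∈ E.pos, p.2 ∈ p.1.inds) ∧ (∀ p ∈ E.neg, p.2 ∈ p.1.inds)

def TExampleSet.size (E : TExampleSet) : ℕ :=
  (E.pos.map (fun p => p.1.size + 1)).sum + (E.neg.map (fun p => p.1.size + 1)).sum

def fitsT (O : Ontology) (q : TPQ) (E : TExampleSet) : Prop :=
  (∀ p ∈ E.pos, entailsT O p.1 p.2 q) ∧ (∀ p ∈ E.neg, ¬ entailsT O p.1 p.2 q)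

/-- `E` uniquely characterises the temporal query `q` wrt `O` within the class `C`. -/
def uniqCharT (O : Ontology) (C : Set TPQ) (q : TPQ) (E : TExampleSet) : Prop :=
  E.wf ∧ fitsT O q E ∧ ∀ q' ∈ C, fitsT O q' E → equivT O q q'

def TPQclass (Q : Set CQ) : Set TPQ := {q | q.overQ Q}
def TPQclassDepth (Q : Set CQ) (n : ℕ) : Set TPQ := {q | q.overQ Q ∧ q.tdp ≤ n}
def TPQclassND (Q : Set CQ) : Set TPQ := {q | q.overQ Q ∧ q.noDiar}

/-! ### Normal form, lone conjuncts, safety -/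

/-- Normal form of a path query wrt `O` (conditions (n1)-(n5), stated on the
sequence representation: `○` corresponds to `suc`, `◇` to `<`, `◇r` to `≤`;
positions `j ≥ 1` whose query is `≡_O ⊤` are internal to a relation sequence `R_i`). -/
def NormalForm (O : Ontology) (q : TPQ) : Prop :=
  ∀ j, 1 ≤ j → j ≤ q.tdp →
    (equivO O (q.r j) topCQ →
        (j < q.tdp ∧ q.op j = q.op (j+1) ∧ q.op j ≠ TOp.diar)) ∧
    (q.op j = TOp.diar → (j = q.tdp ∨ q.op (j+1) ≠ TOp.nxt) →
        ¬ containsO O (q.r (j-1)) (q.r j)) ∧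
    (q.op j = TOp.diar → 2 ≤ j → q.op (j-1) ≠ TOp.nxt →
        ¬ containsO O (q.r j) (q.r (j-1))) ∧
    (q.op j = TOp.diar → CQ.satWrt O (CQ.and (q.r (j-1)) (q.r j)))

/-- `q` has a lone conjunct wrt `O` within `Q`: a primitive block `q_i` (`i > 0`)
whose query is meet-reducible wrt `O` within `Q`. -/
def HasLoneConjunct (O : Ontology) (Q : Set CQ) (q : TPQ) : Prop :=
  ∃ j, 1 ≤ j ∧ j ≤ q.tdp ∧ q.op j ≠ TOp.nxt ∧
    (j = q.tdp ∨ q.op (j+1) ≠ TOp.nxt) ∧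
    ¬ equivO O (q.r j) topCQ ∧ MeetReducible O Q (q.r j)

/-- `q` is safe wrt `O`: equivalent wrt `O` to a query in normal form without
lone conjuncts. -/
def Safe (O : Ontology) (Q : Set CQ) (q : TPQ) : Prop :=
  ∃ q' : TPQ, q'.overQ Q ∧ NormalForm O q' ∧ ¬ HasLoneConjunct O Q q' ∧ equivT O q q'

/-! ### b-normal temporal data instances built from blocks of queries -/

def listInds (L : List DataInstance) : Finset Const :=
  L.foldr (fun A s => A.ind ∪ s) ∅

theorem mem_listInds {L : List DataInstance} {A : DataInstance} (h : A ∈ L) :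
    A.ind ⊆ listInds L := by
  induction L with
  | nil => simp at h
  | cons B T ih =>
    rw [List.mem_cons] at h
    rcases h with rfl | h
    · exact Finset.subset_union_left
    · exact (ih h).trans Finset.subset_union_right

/-- Assemble a list of data instances into a temporal data instance. -/
def mkTDI : List DataInstance → TDI
  | [] => { seq := [DataInstance.empty], ne := by simp,
            inds := listInds [DataInstance.empty], ok := fun _ h => mem_listInds h }
  | A :: L => { seq := A :: L, ne := by simp,
                inds := listInds (A :: L), ok := fun _ h => mem_listInds h }

/-- The `b`-normal sequence `D_0 ∅^b D_1 ∅^b ⋯ ∅^b D_n` determined by the block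
structure `bs` of queries, with `D_i = ŝ_0^i … ŝ_{k_i}^i`. -/
def bSeq (hat : CQ → DataInstance × Const) (b : ℕ) (bs : List (List CQ)) :
    List DataInstance :=
  List.intercalate (List.replicate b DataInstance.empty)
    (bs.map (List.map (fun s => (hat s).1)))

/-- The first timestamp of block `i` in the assembled `b`-normal instance. -/
def dStart (bs : List (List CQ)) (b i : ℕ) : ℕ :=
  ((bs.take i).map List.length).sum + b * i

/-- The block structure `bs` describes a `b`-normal temporal data instance wrt `O`. -/
def BNormal (O : Ontology) (b : ℕ) (bs : List (List CQ)) : Prop :=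
  bs ≠ [] ∧ (∀ blk ∈ bs, blk ≠ [] ∧ blk.length ≤ b) ∧
  ∀ i < bs.length,
    (0 < i → ¬ equivO O ((bs.getD i []).headD default) topCQ) ∧
    ((0 < i ∨ 1 < (bs.getD i []).length) →
      ¬ equivO O ((bs.getD i []).getLastD default) topCQ)

/-- No block of the data instance is a lone conjunct wrt `O` within `Q`. -/
def NoLoneConjuncts (O : Ontology) (Q : Set CQ) (bs : List (List CQ)) : Prop :=
  ∀ i, 0 < i → i < bs.length → ∀ s, bs.getD i [] = [s] → ¬ MeetReducible O Q s

/-- A root `O`-homomorphism from the path query `q` into the pointed temporal data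
instance `(D, a)`. -/
def RootHom (O : Ontology) (q : TPQ) (D : TDI) (a : Const) (h : ℕ → ℕ) : Prop :=
  h 0 = 0 ∧
  (∀ j ≤ q.tdp, h j < D.seq.length ∧ cert O (D.nth (h j)) (q.r j) a) ∧
  ∀ j, 1 ≤ j → j ≤ q.tdp →
    match q.op j with
    | .nxt => h j = h (j-1) + 1
    | .dia => h (j-1) < h j
    | .diar => h (j-1) ≤ h j

/-- Position `j` of `q` belongs to a block (rather than being internal to a
relation sequence `R_i`). -/
def Blockish (O : Ontology) (q : TPQ) (j : ℕ) : Prop :=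
  j = 0 ∨ q.op j = TOp.nxt ∨ ¬ equivO O (q.r j) topCQ

/-- The index of the block of `q` containing position `j`. -/
noncomputable def qBlockIdx (O : Ontology) (q : TPQ) (j : ℕ) : ℕ :=
  {j' : ℕ | j' < j ∧ Blockish O q (j'+1) ∧ q.op (j'+1) ≠ TOp.nxt}.ncard

/-- The conjunction `r_ℓ = ⋀_{h(t) = ℓ} r_t` of all domain queries of `q` mapped to
timestamp `ℓ` by `h`. -/
def conjAt (q : TPQ) (h : ℕ → ℕ) (ℓ : ℕ) : CQ :=
  ⟨((Finset.range (q.tdp + 1)).filter (fun j => h j = ℓ)).biUnion (fun j => (q.r j).atoms)⟩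

/-- `h` is data surjective. -/
def DataSurj (O : Ontology) (hat : CQ → DataInstance × Const) (N : CQ → Finset CQ)
    (bs : List (List CQ)) (b : ℕ) (q : TPQ) (h : ℕ → ℕ) : Prop :=
  ∀ i j, i < bs.length → j < (bs.getD i []).length →
    (∃ t ≤ q.tdp, h t = dStart bs b i + j) →
    ¬ equivO O ((bs.getD i []).getD j default) topCQ →
    ∀ s' ∈ N ((bs.getD i []).getD j default),
      ¬ cert O (hat s').1 (conjAt q h (dStart bs b i + j)) (hat s').2

/-- `h` is a root `O`-isomorphism from `q` onto the `b`-normal instance given by `bs`. -/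
def RootIso (O : Ontology) (hat : CQ → DataInstance × Const) (N : CQ → Finset CQ)
    (bs : List (List CQ)) (b : ℕ) (a : Const) (q : TPQ) (h : ℕ → ℕ) : Prop :=
  RootHom O q (mkTDI (bSeq hat b bs)) a h ∧
  DataSurj O hat N bs b q h ∧
  qBlockIdx O q q.tdp + 1 = bs.length ∧
  ∀ i < bs.length,
    Set.BijOn h {j | j ≤ q.tdp ∧ Blockish O q j ∧ qBlockIdx O q j = i}
      {ℓ | ∃ j < (bs.getD i []).length, ℓ = dStart bs b i + j}

/-- The rewrite rules (a)-(e) on block structures of `b`-normal temporal data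
instances (negative examples are drawn from `N`). -/
inductive RuleStep (O : Ontology) (N : CQ → Finset CQ) :
    List (List CQ) → List (List CQ) → Prop
  | ruleA (pre post : List (List CQ)) (u v : List CQ) (s s' : CQ)
      (hs : ¬ equivO O s topCQ) (hs' : s' ∈ N s) (hpos : pre ≠ [] ∨ u ≠ []) :
      RuleStep O N (pre ++ (u ++ s :: v) :: post) (pre ++ (u ++ s' :: v) :: post)
  | ruleB (pre post : List (List CQ)) (u v : List CQ) (x y : CQ) :
      RuleStep O N (pre ++ (u ++ x :: y :: v) :: post)
        (pre ++ (u ++ [x]) :: (y :: v) :: post)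
  | ruleC (pre post : List (List CQ)) (u v : List CQ) (s : CQ)
      (hs : ¬ equivO O s topCQ) (hu : u ≠ []) (hv : v ≠ []) :
      RuleStep O N (pre ++ (u ++ s :: v) :: post)
        (pre ++ (u ++ [s]) :: (s :: v) :: post)
  | ruleD1 (pre post : List (List CQ)) (u : List CQ) (x s' : CQ)
      (hu : u ≠ []) (hs' : s' ∈ N x) :
      RuleStep O N (pre ++ (u ++ [x]) :: post) (pre ++ (u ++ [s']) :: [x] :: post)
  | ruleD2 (pre post : List (List CQ)) (v : List CQ) (x s' : CQ)
      (hv : v ≠ []) (hs' : s' ∈ N x) :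
      RuleStep O N (pre ++ (x :: v) :: post) (pre ++ [x] :: (s' :: v) :: post)
  | ruleE1 (post : List (List CQ)) (x s' : CQ)
      (hx : ¬ equivO O x topCQ) (hs' : s' ∈ N x) :
      RuleStep O N ([x] :: post) ([s'] :: [x] :: post)
  | ruleE2 (post : List (List CQ)) (v : List CQ) (x : CQ)
      (hx : ¬ equivO O x topCQ) (hv : v ≠ []) :
      RuleStep O N ((x :: v) :: post) ([x] :: (x :: v) :: post)

/-! ### Building a path query from blocks and separators -/

def blockChain (blk : List CQ) : List (TOp × CQ) :=
  (blk.drop 1).map (fun s => (TOp.nxt, s))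

/-- The relation sequence `R_i`: value `0` encodes a single `≤`, value `v ≥ 1`
encodes `v`-many `<` (with `⊤` on the internal positions); `s` is the first query
of the next block. -/
def sepChain : ℕ → CQ → List (TOp × CQ)
  | 0, s => [(TOp.diar, s)]
  | (k+1), s => List.replicate k (TOp.dia, topCQ) ++ [(TOp.dia, s)]

def buildTail : List (List CQ) → List ℕ → List (TOp × CQ)
  | [], _ => []
  | [blk], _ => blockChain blk
  | blk :: blk' :: rest, [] =>
      blockChain blk ++ sepChain 1 (blk'.headD default) ++ buildTail (blk' :: rest) []
  | blk :: blk' :: rest, sep :: seps =>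
      blockChain blk ++ sepChain sep (blk'.headD default) ++ buildTail (blk' :: rest) seps

/-- The path query `q_0 R_1 q_1 ⋯ R_n q_n` with blocks `bs` and separators `seps`. -/
def buildTPQ (bs : List (List CQ)) (seps : List ℕ) : TPQ :=
  ⟨(bs.headD []).headD default, buildTail bs seps⟩

/-- The position, in `buildTPQ bs seps`, of the `j`-th query of block `i`. -/
def qPos (bs : List (List CQ)) (seps : List ℕ) (i j : ℕ) : ℕ :=
  ((bs.take i).map List.length).sum + ((seps.take i).map Nat.pred).sum + j

/-! ## Until queries -/

/-- A path query `r₀ ∧ (l₁ U (r₁ ∧ (l₂ U (⋯ (lₙ U rₙ)⋯))))` from `LTL_p^U(Q^σ)`;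
`none` encodes `l_i = ⊥`. -/
structure UQ where
  head : CQ
  tail : List (Option CQ × CQ)

def uEntailsAux (O : Ontology) (D : TDI) (a : Const) :
    List (Option CQ × CQ) → ℕ → CQ → Prop
  | [], ℓ, r => cert O (D.nth ℓ) r a
  | (l, r') :: rest, ℓ, r =>
      cert O (D.nth ℓ) r a ∧
      ∃ m, ℓ < m ∧ uEntailsAux O D a rest m r' ∧
        ∀ k, ℓ < k → k < m →
          match l with
          | none => False
          | some l' => cert O (D.nth k) l' a

def uEntailsT (O : Ontology) (D : TDI) (a : Const) (q : UQ) : Prop :=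
  ¬ D.satWith O ∨ uEntailsAux O D a q.tail 0 q.head

def equivU (O : Ontology) (q₁ q₂ : UQ) : Prop :=
  ∀ (D : TDI) (a : Const), a ∈ D.inds → (uEntailsT O D a q₁ ↔ uEntailsT O D a q₂)

def fitsU (O : Ontology) (q : UQ) (E : TExampleSet) : Prop :=
  (∀ p ∈ E.pos, uEntailsT O p.1 p.2 q) ∧ (∀ p ∈ E.neg, ¬ uEntailsT O p.1 p.2 q)

def uniqCharU (O : Ontology) (C : Set UQ) (q : UQ) (E : TExampleSet) : Prop :=
  E.wf ∧ fitsU O q E ∧ ∀ q' ∈ C, fitsU O q' E → equivU O q q'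

def UQ.size (q : UQ) : ℕ :=
  q.head.size +
    (q.tail.map (fun p => (match p.1 with | none => 1 | some l => l.size) + p.2.size + 1)).sum

/-- Membership of an until path query in `LTL_p^U(Q^σ)`. -/
def UQ.overQsig (Q : Set CQ) (σ : Sig) (q : UQ) : Prop :=
  (q.head ∈ Q ∧ q.head.inSig σ) ∧
  ∀ p ∈ q.tail, (p.2 ∈ Q ∧ p.2.inSig σ) ∧ ∀ l, p.1 = some l → l ∈ Q ∧ l.inSig σ

/-- `q` is `O`-peerless: `r_i ⊭_O l_i` and `l_i ⊭_O r_i`. -/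
def UQ.peerless (O : Ontology) (q : UQ) : Prop :=
  ∀ p ∈ q.tail, ∀ l, p.1 = some l → ¬ containsO O p.2 l ∧ ¬ containsO O l p.2

def UQclass (Q : Set CQ) (σ : Sig) : Set UQ := {q | q.overQsig Q σ}

/-- `A ⊑ ∃R.A` (`A = 0`, `R = 0`). -/
def elAx1 : Fml :=
  .all 0 (.imp (.un 0 (.var 0)) (.ex 1 (.and (.bin 0 (.var 0) (.var 1)) (.un 0 (.var 1)))))

/-- `∃R.A ⊑ A`. -/
def elAx2 : Fml :=
  .all 0 (.imp (.ex 1 (.and (.bin 0 (.var 0) (.var 1)) (.un 0 (.var 1)))) (.un 0 (.var 0)))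

def Oel : Ontology := {elAx1, elAx2}

/-- The ELIQ `A ∧ B` (`A = 0`, `B = 1`). -/
def qAB : CQ := ⟨{CQAtom.un 0 0, CQAtom.un 1 0}⟩

/-! ### Auxiliary development for Statement 10 -/

section Statement10Aux

open Relation

/-- Inductive semantics of ELIQs. -/
def ELIQ.sat {D : Type} (I : Interp D) : ELIQ → D → Prop
  | .top, _ => True
  | .un A, d => I.un A d
  | .exN P e, d => ∃ d', I.bin P d d' ∧ ELIQ.sat I e d'
  | .exI P e, d => ∃ d', I.bin P d' d ∧ ELIQ.sat I e d'
  | .and e₁ e₂, d => ELIQ.sat I e₁ d ∧ ELIQ.sat I e₂ d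

lemma CQAtom.holds_congr {D : Type} {I : Interp D} {h h' : Var → D} {α : CQAtom}
    (hc : ∀ w ∈ α.vars, h w = h' w) (hh : α.holds I h) : α.holds I h' := by
  cases α with
  | top v => trivial
  | un A v => simpa [CQAtom.holds, ← hc v (by simp [CQAtom.vars])] using hh
  | bin P v w =>
      have h1 := hc v (by simp [CQAtom.vars])
      have h2 := hc w (by simp [CQAtom.vars])
      simpa [CQAtom.holds, ← h1, ← h2] using hh

lemma atomsAux_snd_le : ∀ (e : ELIQ) (v n : ℕ), n ≤ (e.atomsAux v n).2
  | .top, _, _ => le_refl _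
  | .un _, _, _ => le_refl _
  | .exN P e, v, n => by
      simpa [ELIQ.atomsAux] using le_trans (Nat.le_succ n) (atomsAux_snd_le e n (n+1))
  | .exI P e, v, n => by
      simpa [ELIQ.atomsAux] using le_trans (Nat.le_succ n) (atomsAux_snd_le e n (n+1))
  | .and e₁ e₂, v, n => by
      simpa [ELIQ.atomsAux] using
        le_trans (atomsAux_snd_le e₁ v n) (atomsAux_snd_le e₂ v _)

lemma atomsAux_vars : ∀ (e : ELIQ) (v n : ℕ), ∀ α ∈ (e.atomsAux v n).1, ∀ w ∈ α.vars,
    w = v ∨ (n ≤ w ∧ w < (e.atomsAux v n).2)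
  | .top, v, n => by simp [ELIQ.atomsAux]
  | .un A, v, n => by
      simp only [ELIQ.atomsAux, Finset.mem_singleton]
      rintro α rfl w hw
      simp only [CQAtom.vars, Finset.mem_singleton] at hw
      exact Or.inl hw
  | .exN P e, v, n => by
      intro α hα w hw
      simp only [ELIQ.atomsAux, Finset.mem_insert] at hα
      have hsnd : n + 1 ≤ (e.atomsAux n (n+1)).2 := atomsAux_snd_le e n (n+1)
      rcases hα with rfl | hα
      · simp only [CQAtom.vars, Finset.mem_insert, Finset.mem_singleton] at hw
        rcases hw with rfl | rfl
        · exact Or.inl rfl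
        · exact Or.inr ⟨le_refl _, by simpa [ELIQ.atomsAux] using lt_of_lt_of_le (Nat.lt_succ_self _) hsnd⟩
      · rcases atomsAux_vars e n (n+1) α hα w hw with rfl | ⟨h1, h2⟩
        · exact Or.inr ⟨le_refl _, by simpa [ELIQ.atomsAux] using lt_of_lt_of_le (Nat.lt_succ_self _) hsnd⟩
        · exact Or.inr ⟨le_trans (Nat.le_succ n) h1, by simpa [ELIQ.atomsAux] using h2⟩
  | .exI P e, v, n => by
      intro α hα w hw
      simp only [ELIQ.atomsAux, Finset.mem_insert] at hα
      have hsnd : n + 1 ≤ (e.atomsAux n (n+1)).2 := atomsAux_snd_le e n (n+1)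
      rcases hα with rfl | hα
      · simp only [CQAtom.vars, Finset.mem_insert, Finset.mem_singleton] at hw
        rcases hw with rfl | rfl
        · exact Or.inr ⟨le_refl _, by simpa [ELIQ.atomsAux] using lt_of_lt_of_le (Nat.lt_succ_self _) hsnd⟩
        · exact Or.inl rfl
      · rcases atomsAux_vars e n (n+1) α hα w hw with rfl | ⟨h1, h2⟩
        · exact Or.inr ⟨le_refl _, by simpa [ELIQ.atomsAux] using lt_of_lt_of_le (Nat.lt_succ_self _) hsnd⟩
        · exact Or.inr ⟨le_trans (Nat.le_succ n) h1, by simpa [ELIQ.atomsAux] using h2⟩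
  | .and e₁ e₂, v, n => by
      intro α hα w hw
      simp only [ELIQ.atomsAux, Finset.mem_union] at hα
      have hle₁ : n ≤ (e₁.atomsAux v n).2 := atomsAux_snd_le e₁ v n
      have hle₂ : (e₁.atomsAux v n).2 ≤ (e₂.atomsAux v (e₁.atomsAux v n).2).2 :=
        atomsAux_snd_le e₂ v _
      rcases hα with hα | hα
      · rcases atomsAux_vars e₁ v n α hα w hw with rfl | ⟨h1, h2⟩
        · exact Or.inl rfl
        · exact Or.inr ⟨h1, by simpa [ELIQ.atomsAux] using lt_of_lt_of_le h2 hle₂⟩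
      · rcases atomsAux_vars e₂ v (e₁.atomsAux v n).2 α hα w hw with rfl | ⟨h1, h2⟩
        · exact Or.inl rfl
        · exact Or.inr ⟨le_trans hle₁ h1, by simpa [ELIQ.atomsAux] using h2⟩

end Statement10Aux
section Statement10Aux2

lemma sat_of_aux {D : Type} {I : Interp D} : ∀ (e : ELIQ) (v n : ℕ) (h : Var → D),
    (∀ α ∈ (e.atomsAux v n).1, α.holds I h) → e.sat I (h v)
  | .top, v, n, h, _ => trivial
  | .un A, v, n, h, H => by
      have := H (CQAtom.un A v) (by simp [ELIQ.atomsAux])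
      simpa [CQAtom.holds, ELIQ.sat] using this
  | .exN P e, v, n, h, H => by
      have hb := H (CQAtom.bin P v n) (by simp [ELIQ.atomsAux])
      have hs := sat_of_aux e n (n+1) h (fun α hα => H α (by
        simp only [ELIQ.atomsAux, Finset.mem_insert]; exact Or.inr hα))
      exact ⟨h n, by simpa [CQAtom.holds] using hb, hs⟩
  | .exI P e, v, n, h, H => by
      have hb := H (CQAtom.bin P n v) (by simp [ELIQ.atomsAux])
      have hs := sat_of_aux e n (n+1) h (fun α hα => H α (by
        simp only [ELIQ.atomsAux, Finset.mem_insert]; exact Or.inr hα))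
      exact ⟨h n, by simpa [CQAtom.holds] using hb, hs⟩
  | .and e₁ e₂, v, n, h, H => by
      refine ⟨sat_of_aux e₁ v n h (fun α hα => H α ?_),
              sat_of_aux e₂ v (e₁.atomsAux v n).2 h (fun α hα => H α ?_)⟩
      · simp only [ELIQ.atomsAux, Finset.mem_union]; exact Or.inl hα
      · simp only [ELIQ.atomsAux, Finset.mem_union]; exact Or.inr hα

lemma aux_of_sat {D : Type} {I : Interp D} : ∀ (e : ELIQ) (v n : ℕ) (d : D), v < n →
    e.sat I d → ∃ h : Var → D, h v = d ∧ ∀ α ∈ (e.atomsAux v n).1, α.holds I h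
  | .top, v, n, d, _, _ => ⟨fun _ => d, rfl, by simp [ELIQ.atomsAux]⟩
  | .un A, v, n, d, _, hs => by
      refine ⟨fun _ => d, rfl, ?_⟩
      simp only [ELIQ.atomsAux, Finset.mem_singleton]
      rintro α rfl
      simpa [CQAtom.holds, ELIQ.sat] using hs
  | .exN P e, v, n, d, hvn, hs => by
      obtain ⟨d', hb, hs'⟩ := hs
      obtain ⟨h', h'n, H'⟩ := aux_of_sat e n (n+1) d' (Nat.lt_succ_self n) hs'
      refine ⟨Function.update h' v d, Function.update_self _ _ _, ?_⟩
      intro α hα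
      simp only [ELIQ.atomsAux, Finset.mem_insert] at hα
      rcases hα with rfl | hα
      · show I.bin P (Function.update h' v d v) (Function.update h' v d n)
        rw [Function.update_self, Function.update_of_ne (Nat.ne_of_lt hvn).symm]
        rw [h'n]; exact hb
      · refine CQAtom.holds_congr (fun w hw => ?_) (H' α hα)
        show h' w = Function.update h' v d w
        rcases atomsAux_vars e n (n+1) α hα w hw with h | ⟨h1, h2⟩
        · subst h
          rw [Function.update_of_ne (Nat.ne_of_lt hvn).symm]
        · rw [Function.update_of_ne
            (Nat.ne_of_lt (lt_of_lt_of_le hvn (Nat.le_of_succ_le h1))).symm]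
  | .exI P e, v, n, d, hvn, hs => by
      obtain ⟨d', hb, hs'⟩ := hs
      obtain ⟨h', h'n, H'⟩ := aux_of_sat e n (n+1) d' (Nat.lt_succ_self n) hs'
      refine ⟨Function.update h' v d, Function.update_self _ _ _, ?_⟩
      intro α hα
      simp only [ELIQ.atomsAux, Finset.mem_insert] at hα
      rcases hα with rfl | hα
      · show I.bin P (Function.update h' v d n) (Function.update h' v d v)
        rw [Function.update_self, Function.update_of_ne (Nat.ne_of_lt hvn).symm]
        rw [h'n]; exact hb
      · refine CQAtom.holds_congr (fun w hw => ?_) (H' α hα)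
        show h' w = Function.update h' v d w
        rcases atomsAux_vars e n (n+1) α hα w hw with h | ⟨h1, h2⟩
        · subst h
          rw [Function.update_of_ne (Nat.ne_of_lt hvn).symm]
        · rw [Function.update_of_ne
            (Nat.ne_of_lt (lt_of_lt_of_le hvn (Nat.le_of_succ_le h1))).symm]
  | .and e₁ e₂, v, n, d, hvn, hs => by
      obtain ⟨hs₁, hs₂⟩ := hs
      obtain ⟨h₁, h₁v, H₁⟩ := aux_of_sat e₁ v n d hvn hs₁
      have hnm : n ≤ (e₁.atomsAux v n).2 := atomsAux_snd_le e₁ v n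
      have hvm : v < (e₁.atomsAux v n).2 := lt_of_lt_of_le hvn hnm
      obtain ⟨h₂, h₂v, H₂⟩ := aux_of_sat e₂ v (e₁.atomsAux v n).2 d hvm hs₂
      refine ⟨fun w => if n ≤ w ∧ w < (e₁.atomsAux v n).2 then h₁ w else h₂ w, ?_, ?_⟩
      · show (if n ≤ v ∧ v < (e₁.atomsAux v n).2 then h₁ v else h₂ v) = d
        rw [if_neg (fun hc => lt_irrefl v (lt_of_lt_of_le hvn hc.1))]
        exact h₂v
      intro α hα
      simp only [ELIQ.atomsAux, Finset.mem_union] at hα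
      rcases hα with hα | hα
      · refine CQAtom.holds_congr (fun w hw => ?_) (H₁ α hα)
        show h₁ w = if n ≤ w ∧ w < (e₁.atomsAux v n).2 then h₁ w else h₂ w
        rcases atomsAux_vars e₁ v n α hα w hw with h | ⟨h1, h2⟩
        · subst h
          rw [if_neg (fun hc => lt_irrefl _ (lt_of_lt_of_le hvn hc.1)), h₂v, h₁v]
        · rw [if_pos ⟨h1, h2⟩]
      · refine CQAtom.holds_congr (fun w hw => ?_) (H₂ α hα)
        show h₂ w = if n ≤ w ∧ w < (e₁.atomsAux v n).2 then h₁ w else h₂ w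
        rcases atomsAux_vars e₂ v (e₁.atomsAux v n).2 α hα w hw with h | ⟨h1, h2⟩
        · subst h
          rw [if_neg (fun hc => lt_irrefl _ (lt_of_lt_of_le hvn hc.1))]
        · rw [if_neg (fun hc => lt_irrefl w (lt_of_lt_of_le hc.2 h1))]

lemma satCQ_toCQ_iff {D : Type} (I : Interp D) (e : ELIQ) (d : D) :
    I.satCQ e.toCQ d ↔ e.sat I d := by
  constructor
  · rintro ⟨h, h0, H⟩
    have := sat_of_aux e 0 1 h H
    rwa [h0] at this
  · intro hs
    obtain ⟨h, h0, H⟩ := aux_of_sat e 0 1 d Nat.one_pos hs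
    exact ⟨h, h0, H⟩

end Statement10Aux2
section Statement10Aux3

lemma containsO_refl (O : Ontology) (q : CQ) : containsO O q q := fun _ _ _ h => h

lemma containsO_trans {O : Ontology} {q₁ q₂ q₃ : CQ}
    (h12 : containsO O q₁ q₂) (h23 : containsO O q₂ q₃) : containsO O q₁ q₃ :=
  fun A a ha h => h23 A a ha (h12 A a ha h)

lemma toAtom_mem_induced {q : CQ} {α : CQAtom} (hα : α ∈ q.atoms) :
    α.toAtom id ∈ (inducedDI q).atoms :=
  Finset.mem_insert_of_mem (Finset.mem_image.2 ⟨α, hα, rfl⟩)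

lemma zero_mem_induced (q : CQ) : 0 ∈ (inducedDI q).ind :=
  Finset.mem_biUnion.2 ⟨Atom.top 0, Finset.mem_insert_self _ _, by simp [Atom.consts]⟩

lemma cert_induced (O : Ontology) (q : CQ) : cert O (inducedDI q) q 0 := by
  intro D I _ hD
  refine ⟨fun v => I.cst v, rfl, ?_⟩
  intro α hα
  cases α with
  | top v => trivial
  | un A v => exact hD (Atom.un A v) (toAtom_mem_induced hα)
  | bin P v w => exact hD (Atom.bin P v w) (toAtom_mem_induced hα)

lemma holds_elAx1 {D : Type} (I : Interp D) (ν : Var → D) :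
    elAx1.Holds I ν ↔ ∀ d, I.un 0 d → ∃ d', I.bin 0 d d' ∧ I.un 0 d' := by
  simp [elAx1, Fml.Holds, Term.eval, Function.update]

lemma holds_elAx2 {D : Type} (I : Interp D) (ν : Var → D) :
    elAx2.Holds I ν ↔ ∀ d, (∃ d', I.bin 0 d d' ∧ I.un 0 d') → I.un 0 d := by
  simp [elAx2, Fml.Holds, Term.eval, Function.update]

lemma elAx1_mem : elAx1 ∈ Oel := Finset.mem_insert_self _ _
lemma elAx2_mem : elAx2 ∈ Oel := Finset.mem_insert_of_mem (Finset.mem_singleton_self _)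

lemma modelsO_Oel_of {D : Type} (I : Interp D)
    (h1 : ∀ d, I.un 0 d → ∃ d', I.bin 0 d d' ∧ I.un 0 d')
    (h2 : ∀ d d', I.bin 0 d d' → I.un 0 d' → I.un 0 d) : I.modelsO Oel := by
  intro f hf ν
  rcases Finset.mem_insert.1 hf with rfl | hf
  · exact (holds_elAx1 I ν).2 h1
  · rw [Finset.mem_singleton] at hf
    subst hf
    exact (holds_elAx2 I ν).2 (fun d ⟨d', hb, hu⟩ => h2 d d' hb hu)

lemma Oel_rule1 {D : Type} {I : Interp D} (h : I.modelsO Oel) :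
    ∀ d, I.un 0 d → ∃ d', I.bin 0 d d' ∧ I.un 0 d' :=
  fun d hd => (holds_elAx1 I (fun _ => d)).1 (h elAx1 elAx1_mem _) d hd

lemma Oel_rule2 {D : Type} {I : Interp D} (h : I.modelsO Oel) :
    ∀ d d', I.bin 0 d d' → I.un 0 d' → I.un 0 d :=
  fun d d' hb hu => (holds_elAx2 I (fun _ => d)).1 (h elAx2 elAx2_mem _) d ⟨d', hb, hu⟩

/-! ### ELIQ combinators -/

def fwdE : ℕ → ELIQ → ELIQ
  | 0, e => e
  | k+1, e => .exN 0 (fwdE k e)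

def backE : ℕ → ELIQ
  | 0 => .top
  | k+1 => .exI 0 (backE k)

def eN (n : ℕ) : ELIQ := .and (.un 1) (fwdE n .top)

def eStar (i j : ℕ) : ELIQ := fwdE i (backE j)

def eAB : ELIQ := .and (.un 0) (.un 1)

lemma eAB_toCQ : eAB.toCQ = qAB := by decide

lemma sat_fwdE_iff {D : Type} (I : Interp D) (k : ℕ) (e : ELIQ) (d : D) :
    (fwdE k e).sat I d ↔
      ∃ g : ℕ → D, g 0 = d ∧ (∀ t, t < k → I.bin 0 (g t) (g (t+1))) ∧ e.sat I (g k) := by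
  induction k generalizing d with
  | zero =>
      simp only [fwdE]
      constructor
      · intro h
        exact ⟨fun _ => d, rfl, fun t ht => absurd ht (Nat.not_lt_zero t), h⟩
      · rintro ⟨g, rfl, -, hs⟩
        exact hs
  | succ k ih =>
      simp only [fwdE, ELIQ.sat]
      constructor
      · rintro ⟨d', hb, hs⟩
        obtain ⟨g, hg0, hge, hgs⟩ := (ih d').1 hs
        refine ⟨fun t => Nat.casesOn t d g, rfl, ?_, hgs⟩
        intro t ht
        cases t with
        | zero => show I.bin 0 d (g 0); rw [hg0]; exact hb
        | succ t => exact hge t (Nat.lt_of_succ_lt_succ ht)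
      · rintro ⟨g, hg0, hge, hgs⟩
        refine ⟨g 1, by rw [← hg0]; exact hge 0 (Nat.succ_pos k), ?_⟩
        exact (ih (g 1)).2 ⟨fun t => g (t+1), rfl,
          fun t ht => hge (t+1) (Nat.succ_lt_succ ht), hgs⟩

lemma sat_backE_iff {D : Type} (I : Interp D) (k : ℕ) (d : D) :
    (backE k).sat I d ↔
      ∃ g : ℕ → D, g 0 = d ∧ ∀ t, t < k → I.bin 0 (g (t+1)) (g t) := by
  induction k generalizing d with
  | zero =>
      simp only [backE, ELIQ.sat]
      constructor
      · intro _
        exact ⟨fun _ => d, rfl, fun t ht => absurd ht (Nat.not_lt_zero t)⟩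
      · intro _
        trivial
  | succ k ih =>
      simp only [backE, ELIQ.sat]
      constructor
      · rintro ⟨d', hb, hs⟩
        obtain ⟨g, hg0, hge⟩ := (ih d').1 hs
        refine ⟨fun t => Nat.casesOn t d g, rfl, ?_⟩
        intro t ht
        cases t with
        | zero => show I.bin 0 (g 0) d; rw [hg0]; exact hb
        | succ t => exact hge t (Nat.lt_of_succ_lt_succ ht)
      · rintro ⟨g, hg0, hge⟩
        refine ⟨g 1, by rw [← hg0]; exact hge 0 (Nat.succ_pos k), ?_⟩
        exact (ih (g 1)).2 ⟨fun t => g (t+1), rfl,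
          fun t ht => hge (t+1) (Nat.succ_lt_succ ht)⟩

lemma fwdE_top_sat {D : Type} {I : Interp D}
    (h1 : ∀ d, I.un 0 d → ∃ d', I.bin 0 d d' ∧ I.un 0 d') :
    ∀ (n : ℕ) (d : D), I.un 0 d → (fwdE n .top).sat I d
  | 0, _, _ => trivial
  | n+1, d, hd => by
      obtain ⟨d', hb, hd'⟩ := h1 d hd
      exact ⟨d', hb, fwdE_top_sat h1 n d' hd'⟩

lemma qAB_atoms_iff (α : CQAtom) :
    α ∈ qAB.atoms ↔ α = CQAtom.un 0 0 ∨ α = CQAtom.un 1 0 := by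
  simp [qAB]

lemma containsO_qAB_eN (n : ℕ) : containsO Oel qAB (eN n).toCQ := by
  intro A a _ hc D I hO hD
  obtain ⟨h, h0, H⟩ := hc D I hO hD
  have hA : I.un 0 (h 0) := H (CQAtom.un 0 0) ((qAB_atoms_iff _).2 (Or.inl rfl))
  have hB : I.un 1 (h 0) := H (CQAtom.un 1 0) ((qAB_atoms_iff _).2 (Or.inr rfl))
  rw [satCQ_toCQ_iff, ← h0]
  exact ⟨hB, fwdE_top_sat (Oel_rule1 hO) n (h 0) hA⟩

lemma fwdE_top_atoms : ∀ (k v m : ℕ), ∀ α ∈ ((fwdE k ELIQ.top).atomsAux v m).1,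
    ∃ x y, α = CQAtom.bin 0 x y
  | 0, v, m => by simp [fwdE, ELIQ.atomsAux]
  | k+1, v, m => by
      intro α hα
      simp only [fwdE, ELIQ.atomsAux, Finset.mem_insert] at hα
      rcases hα with rfl | hα
      · exact ⟨v, m, rfl⟩
      · exact fwdE_top_atoms k m (m+1) α hα

lemma eN_toCQ_atoms (n : ℕ) : ∀ α ∈ (eN n).toCQ.atoms,
    α = CQAtom.un 1 0 ∨ ∃ x y, α = CQAtom.bin 0 x y := by
  intro α hα
  have hα' : α ∈ ((ELIQ.un 1).atomsAux 0 1).1 ∪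
      ((fwdE n ELIQ.top).atomsAux 0 ((ELIQ.un 1).atomsAux 0 1).2).1 := hα
  rcases Finset.mem_union.1 hα' with h | h
  · left
    simpa [ELIQ.atomsAux] using h
  · right
    exact fwdE_top_atoms n 0 _ α h

/-- Model with no `A`-elements. -/
def I0 : Interp ℕ where
  cst := id
  cstInj := fun _ _ h => h
  un := fun A _ => A ≠ 0
  bin := fun _ _ _ => True

lemma I0_modelsO : I0.modelsO Oel := by
  refine modelsO_Oel_of I0 (fun d hd => absurd rfl hd) (fun d d' _ hu => absurd rfl hu)

lemma not_containsO_eN_qAB (n : ℕ) : ¬ containsO Oel (eN n).toCQ qAB := by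
  intro hc
  have hcert := hc (inducedDI (eN n).toCQ) 0 (zero_mem_induced _) (cert_induced _ _)
  have hD : I0.modelsD (inducedDI (eN n).toCQ) := by
    intro α hα
    rcases Finset.mem_insert.1 hα with rfl | hα
    · trivial
    · obtain ⟨β, hβ, rfl⟩ := Finset.mem_image.1 hα
      rcases eN_toCQ_atoms n β hβ with rfl | ⟨x, y, rfl⟩
      · exact Nat.one_ne_zero
      · trivial
  obtain ⟨h, h0, H⟩ := hcert ℕ I0 I0_modelsO hD
  exact (H (CQAtom.un 0 0) ((qAB_atoms_iff _).2 (Or.inl rfl))) rfl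

/-! ### The canonical/chase model of the instance induced by `q'` -/

abbrev Redge (q' : CQ) (x y : Const) : Prop := CQAtom.bin 0 x y ∈ q'.atoms

def chA (q' : CQ) (c : Const) : Prop :=
  ∃ d, Relation.ReflTransGen (Redge q') c d ∧ CQAtom.un 0 d ∈ q'.atoms

lemma chA_of_reach {q' : CQ} {a b : Const}
    (h : Relation.ReflTransGen (Redge q') a b) (hb : chA q' b) : chA q' a := by
  obtain ⟨d, hd, hA⟩ := hb
  exact ⟨d, h.trans hd, hA⟩

def I1 (q' : CQ) : Interp ℕ where
  cst := id
  cstInj := fun _ _ h => h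
  un := fun A c => (A = 0 ∧ chA q' c) ∨ CQAtom.un A c ∈ q'.atoms
  bin := fun P x y => (P = 0 ∧ x = y ∧ chA q' x) ∨ CQAtom.bin P x y ∈ q'.atoms

lemma I1_un0 {q' : CQ} {c : ℕ} : (I1 q').un 0 c ↔ chA q' c := by
  constructor
  · rintro (⟨-, h⟩ | h)
    · exact h
    · exact ⟨c, Relation.ReflTransGen.refl, h⟩
  · intro h
    exact Or.inl ⟨rfl, h⟩

lemma I1_modelsO (q' : CQ) : (I1 q').modelsO Oel := by
  refine modelsO_Oel_of _ ?_ ?_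
  · intro d hd
    have hc := I1_un0.1 hd
    exact ⟨d, Or.inl ⟨rfl, rfl, hc⟩, Or.inl ⟨rfl, hc⟩⟩
  · intro d d' hb hu
    have hc' := I1_un0.1 hu
    rcases hb with ⟨-, rfl, hcd⟩ | he
    · exact I1_un0.2 hc'
    · obtain ⟨e, hrtg, hA⟩ := hc'
      exact I1_un0.2 ⟨e, Relation.ReflTransGen.head he hrtg, hA⟩

lemma I1_modelsD (q' : CQ) : (I1 q').modelsD (inducedDI q') := by
  intro α hα
  rcases Finset.mem_insert.1 hα with rfl | hα
  · trivial
  · obtain ⟨β, hβ, rfl⟩ := Finset.mem_image.1 hα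
    cases β with
    | top v => trivial
    | un A v => exact Or.inr hβ
    | bin P v w => exact Or.inr hβ

/-! ### Containments produced in the two cases -/

lemma containsO_qAB_of_chA {q' : CQ} (hB : CQAtom.un 1 0 ∈ q'.atoms) (hch : chA q' 0) :
    containsO Oel q' qAB := by
  intro A a _ hc D I hO hD
  obtain ⟨h, h0, H⟩ := hc D I hO hD
  obtain ⟨dA, hrtg, hAatom⟩ := hch
  have hr2 := Oel_rule2 hO
  have hun : ∀ x : Const, Relation.ReflTransGen (Redge q') x dA → I.un 0 (h x) := by
    intro x hx
    induction hx using Relation.ReflTransGen.head_induction_on with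
    | refl => exact H (CQAtom.un 0 dA) hAatom
    | head hr _ ih => exact hr2 _ _ (H _ hr) ih
  refine ⟨h, h0, ?_⟩
  intro α hα
  rcases (qAB_atoms_iff α).1 hα with rfl | rfl
  · exact hun 0 hrtg
  · exact H _ hB

lemma containsO_eStar {q' : CQ} {i j : ℕ} (g gb : ℕ → Const)
    (hg0 : g 0 = 0) (hfe : ∀ t, t < i → Redge q' (g t) (g (t+1)))
    (hgb0 : gb 0 = g i) (hbe : ∀ t, t < j → Redge q' (gb (t+1)) (gb t)) :
    containsO Oel q' (eStar i j).toCQ := by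
  intro A a _ hc D I hO hD
  obtain ⟨h, h0, H⟩ := hc D I hO hD
  rw [satCQ_toCQ_iff]
  refine (sat_fwdE_iff I i (backE j) (I.cst a)).2
    ⟨fun t => h (g t), ?_, fun t ht => H _ (hfe t ht), ?_⟩
  · show h (g 0) = I.cst a
    rw [hg0, h0]
  · refine (sat_backE_iff I j (h (g i))).2
      ⟨fun t => h (gb t), ?_, fun t ht => H _ (hbe t ht)⟩
    show h (gb 0) = h (g i)
    rw [hgb0]

/-! ### Refuting `qAB ⊨ eStar` via the successor model -/

def Isuc : Interp ℕ where
  cst := id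
  cstInj := fun _ _ h => h
  un := fun _ _ => True
  bin := fun _ x y => y = x + 1

lemma Isuc_modelsO : Isuc.modelsO Oel :=
  modelsO_Oel_of Isuc (fun d _ => ⟨d + 1, rfl, trivial⟩) (fun _ _ _ _ => trivial)

lemma Isuc_modelsD : Isuc.modelsD (inducedDI qAB) := by
  intro α hα
  rcases Finset.mem_insert.1 hα with rfl | hα
  · trivial
  · obtain ⟨β, hβ, rfl⟩ := Finset.mem_image.1 hα
    rcases (qAB_atoms_iff β).1 hβ with rfl | rfl
    · trivial
    · trivial

lemma not_cert_eStar (i : ℕ) : ¬ cert Oel (inducedDI qAB) (eStar i (i+1)).toCQ 0 := by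
  intro hc
  have hsat : (eStar i (i+1)).sat Isuc 0 :=
    (satCQ_toCQ_iff Isuc _ _).1 (hc ℕ Isuc Isuc_modelsO Isuc_modelsD)
  obtain ⟨g, hg0, hge, hgs⟩ := (sat_fwdE_iff Isuc i (backE (i+1)) 0).1 hsat
  obtain ⟨gb, hgb0, hgbe⟩ := (sat_backE_iff Isuc (i+1) (g i)).1 hgs
  have hgt : ∀ t, t ≤ i → g t = t := by
    intro t
    induction t with
    | zero => intro _; exact hg0
    | succ t iht =>
        intro ht
        have he : g (t+1) = g t + 1 := hge t (Nat.lt_of_succ_le ht)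
        rw [he, iht (Nat.le_of_succ_le ht)]
  have key : ∀ t, t ≤ i + 1 → gb t + t = i := by
    intro t
    induction t with
    | zero => intro _; rw [Nat.add_zero, hgb0, hgt i (le_refl i)]
    | succ t iht =>
        intro ht
        have he : gb t = gb (t+1) + 1 := hgbe t (Nat.lt_of_succ_le ht)
        have h2 := iht (Nat.le_of_succ_le ht)
        rw [he] at h2
        rw [← h2, Nat.add_assoc, Nat.add_comm 1 t]
  have hfin := key (i+1) (le_refl _)
  have : i + 1 ≤ i := le_trans (Nat.le_add_left (i+1) (gb (i+1))) (le_of_eq hfin)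
  exact absurd this (Nat.not_succ_le_self i)

/-! ### The backward cycle walk -/

lemma cycle_paths {q' : CQ} {g : ℕ → Const} {n i j : ℕ}
    (hedge : ∀ t, t < n → Redge q' (g t) (g (t+1)))
    (hij : i < j) (hjn : j ≤ n) (hg : g i = g j) :
    ∀ t : ℕ, Redge q' (g (j - (t+1) % (j-i))) (g (j - t % (j-i))) := by
  intro t
  set L := j - i with hL
  have hr : t % L < L := Nat.mod_lt _ (by omega)
  rcases Nat.lt_or_ge (t % L + 1) L with hcase | hcase
  · have h1 : (t+1) % L = t % L + 1 := by
      have ht : t + 1 = L * (t / L) + (t % L + 1) := by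
        rw [← Nat.add_assoc, Nat.div_add_mod]
      rw [ht, Nat.mul_add_mod, Nat.mod_eq_of_lt hcase]
    have h2 := hedge (j - t % L - 1) (by omega)
    have h3 : j - t % L - 1 + 1 = j - t % L := by omega
    have h4 : j - (t % L + 1) = j - t % L - 1 := by omega
    rw [h1, h4]
    rw [h3] at h2
    exact h2
  · have hc2 : t % L + 1 = L := by omega
    have h1 : (t+1) % L = 0 := by
      have hdm := Nat.div_add_mod t L
      have ht : t + 1 = L * (t / L + 1) := by
        rw [Nat.mul_add, Nat.mul_one]
        conv_lhs => rw [← hdm]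
        rw [Nat.add_assoc, hc2]
      rw [ht, Nat.mul_mod_right]
    have h2 : j - t % L = i + 1 := by omega
    rw [h1, h2, Nat.sub_zero, ← hg]
    exact hedge i (by omega)

end Statement10Aux3
/-- wrt the EL ontology `{A ⊑ ∃R.A, ∃R.A ⊑ A}`, the ELIQ `A ∧ B`
has no finite CQ-frontier and no finite frontier within ELIQ. -/
theorem statement10 :
    (¬ ∃ F : Finset CQ, IsCQFrontier Oel qAB ↑F) ∧
    ¬ ∃ F : Finset CQ, IsFrontier Oel ELIQall qAB ↑F := by
  have main : ¬ ∃ F : Finset CQ, IsCQFrontier Oel qAB ↑F := by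
    rintro ⟨F, hi, hii⟩
    set n := F.sup (fun s => s.vars.card) + 1 with hn
    obtain ⟨q', hq'F, hq'⟩ := hii (eN n) (containsO_qAB_eN n) (not_containsO_eN_qAB n)
    have hq'card : q'.vars.card < n :=
      Nat.lt_succ_of_le (Finset.le_sup (f := fun s => s.vars.card) (Finset.mem_coe.1 hq'F))
    have hcert : cert Oel (inducedDI q') (eN n).toCQ 0 :=
      hq' (inducedDI q') 0 (zero_mem_induced q') (cert_induced Oel q')
    have hsat : (eN n).sat (I1 q') 0 :=
      (satCQ_toCQ_iff (I1 q') (eN n) ((I1 q').cst 0)).1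
        (hcert ℕ (I1 q') (I1_modelsO q') (I1_modelsD q'))
    obtain ⟨hBsat, hfwd⟩ := hsat
    have hB : CQAtom.un 1 0 ∈ q'.atoms := by
      rcases hBsat with ⟨h10, -⟩ | h
      · exact absurd h10 Nat.one_ne_zero
      · exact h
    obtain ⟨g, hg0, hge, -⟩ := (sat_fwdE_iff (I1 q') n ELIQ.top 0).1 hfwd
    by_cases hch : chA q' 0
    · have hcont := containsO_qAB_of_chA hB hch
      have h2 := (hi q' hq'F eAB (by rwa [eAB_toCQ])).2
      rw [eAB_toCQ] at h2
      exact h2 (containsO_refl Oel qAB)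
    · -- every step of the path is a real edge of `q'`
      have hstep : ∀ t, Relation.ReflTransGen (Redge q') 0 (g t) → t < n →
          Redge q' (g t) (g (t+1)) := by
        intro t hr ht
        rcases hge t ht with ⟨-, -, hc⟩ | he
        · exact absurd (chA_of_reach hr hc) hch
        · exact he
      have hreach : ∀ t, t ≤ n → Relation.ReflTransGen (Redge q') 0 (g t) := by
        intro t
        induction t with
        | zero => intro _; rw [hg0]
        | succ t ih =>
            intro ht
            have h1 := ih (Nat.le_of_succ_le ht)
            exact h1.tail (hstep t h1 (Nat.lt_of_succ_le ht))
      have hedge : ∀ t, t < n → Redge q' (g t) (g (t+1)) :=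
        fun t ht => hstep t (hreach t (Nat.le_of_lt ht)) ht
      have hmaps : ∀ t ∈ Finset.Icc 1 n, g t ∈ q'.vars := by
        intro t ht
        rw [Finset.mem_Icc] at ht
        have he := hedge (t-1) (by omega)
        have heq : t - 1 + 1 = t := by omega
        rw [heq] at he
        exact Finset.mem_insert_of_mem
          (Finset.mem_biUnion.2 ⟨_, he, by simp [CQAtom.vars]⟩)
      have hlt : q'.vars.card < (Finset.Icc 1 n).card := by
        rw [Nat.card_Icc]
        omega
      obtain ⟨i, hiI, j, hjI, hij, hgij⟩ :=
        Finset.exists_ne_map_eq_of_card_lt_of_maps_to hlt hmaps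
      rw [Finset.mem_Icc] at hiI hjI
      have key : ∀ i j : ℕ, 1 ≤ i → j ≤ n → i < j → g i = g j → False := by
        intro i j hi1 hjn hlt' hg
        have hbe : ∀ t, t < i + 1 → Redge q' (g (j - (t+1) % (j-i))) (g (j - t % (j-i))) :=
          fun t _ => cycle_paths hedge hlt' hjn hg t
        have hgb0 : g (j - 0 % (j-i)) = g i := by
          rw [Nat.zero_mod, Nat.sub_zero, hg]
        have hfe : ∀ t, t < i → Redge q' (g t) (g (t+1)) :=
          fun t ht => hedge t (by omega)
        have hcont := containsO_eStar (q' := q') (i := i) (j := i+1)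
          g (fun t => g (j - t % (j-i))) hg0 hfe hgb0 hbe
        have hq2 := (hi q' hq'F (eStar i (i+1)) hcont).1
        exact not_cert_eStar i
          (hq2 (inducedDI qAB) 0 (zero_mem_induced qAB) (cert_induced Oel qAB))
      rcases Nat.lt_or_ge i j with hlt' | hge'
      · exact key i j (by omega) (by omega) hlt' hgij
      · have hlt'' : j < i := by omega
        exact key j i (by omega) (by omega) hlt'' hgij.symm
  refine ⟨main, ?_⟩
  rintro ⟨F, hsub, hmem, hcov⟩
  apply main
  refine ⟨F, ?_, ?_⟩
  · intro q' hq' e hce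
    obtain ⟨h1, h2⟩ := hmem q' hq'
    exact ⟨containsO_trans h1 hce, fun hh => h2 (containsO_trans hce hh)⟩
  · intro e h1 h2
    rcases hcov e.toCQ ⟨e, rfl⟩ h1 with hc | ⟨q', hq', hc⟩
    · exact absurd hc h2
    · exact ⟨q', hq', hc⟩

end OMQLean
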